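/- Let D be an (n,α,p)-pseudorandom digraph with p = ω((log n)^8/n), and let X, Y ⊆ V(D) (not necessarily disjoint) with |X| = ⌊(log n)^2/(2p)⌋, |Y| ≥ 6(log n)^{2.1}/(αp), and suppose every x ∈ X satisfies d^+(x,Y), d^−(x,Y) ≥ (1/2 + α/2)p|Y|. Then |N^+(X,Y)| ≥ (1/2 + α/20)|Y| and |N^−(X,Y)| ≥ (1/2 + α/20)|Y|. -/

import Mathlib

open Filter

def outDeg {n : ℕ} (D : Fin n → Fin n → Bool) (v : Fin n) (S : Finset (Fin n)) : ℕ :=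
  (S.filter fun w => D v w = true).card

def inDeg {n : ℕ} (D : Fin n → Fin n → Bool) (v : Fin n) (S : Finset (Fin n)) : ℕ :=
  (S.filter fun w => D w v = true).card

def arcsIn {n : ℕ} (D : Fin n → Fin n → Bool) (X : Finset (Fin n)) : ℕ :=
  ((X ×ˢ X).filter fun e => D e.1 e.2 = true).card

def arcsBetween {n : ℕ} (D : Fin n → Fin n → Bool) (X Y : Finset (Fin n)) : ℕ :=
  ((X ×ˢ Y).filter fun e => D e.1 e.2 = true).card

/-- An `(n, α, p)`-pseudorandom digraph, as in Definition 3.1 of the paper. -/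
def IsPseudorandom (n : ℕ) (α p : ℝ) (D : Fin n → Fin n → Bool) : Prop :=
  (∀ v : Fin n, (1/2 + 2*α) * n * p ≤ (outDeg D v Finset.univ : ℝ) ∧
    (1/2 + 2*α) * n * p ≤ (inDeg D v Finset.univ : ℝ)) ∧
  (∀ X : Finset (Fin n), (X.card : ℝ) ≤ (Real.log n)^2 / p →
    (arcsIn D X : ℝ) ≤ (X.card : ℝ) * (Real.log n) ^ (2.1 : ℝ)) ∧
  (∀ X Y : Finset (Fin n), Disjoint X Y →
    (Real.log n) ^ (1.1 : ℝ) / p ≤ (X.card : ℝ) →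
    (Real.log n) ^ (1.1 : ℝ) / p ≤ (Y.card : ℝ) →
    (arcsBetween D X Y : ℝ) ≤ (1 + α/2) * X.card * Y.card * p)

/-- `N^+(X, Y)`: out-neighbours of `X` inside `Y`. -/
def outNbhd {n : ℕ} (D : Fin n → Fin n → Bool) (X Y : Finset (Fin n)) : Finset (Fin n) :=
  Y.filter fun y => ∃ x ∈ X, D x y = true

/-- `N^-(X, Y)`: in-neighbours of `X` inside `Y`. -/
def inNbhd {n : ℕ} (D : Fin n → Fin n → Bool) (X Y : Finset (Fin n)) : Finset (Fin n) :=
  Y.filter fun y => ∃ x ∈ X, D y x = true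


/-!
Count the arcs from `X` to `Y`. The degree condition provides at least `(1/2 + α/2) p |X| |Y|`
of them. By (P2) at most `|X| log^{2.1} n` end inside `X`, which is negligible since
`|Y| ≥ 6 log^{2.1} n / (α p)`. The others end in `N⁺(X, Y) \ X`; padded outside `X` to the size
`log^{1.1} n / p` where (P3) applies, this set receives at most `(1 + α/2) p |X| |N⁺(X, Y)|` arcs.
Hence `(1 + α/2) |N⁺(X, Y)| ≥ (1/2 + α/3) |Y|`, which gives the claim when `α ≤ 1`; and `α ≥ 1` is
impossible for a pseudorandom digraph. In-neighbourhoods are out-neighbourhoods of the reversed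
digraph.
-/

open Finset Real

section Arcs

variable {n : ℕ} (D : Fin n → Fin n → Bool)

lemma arcsBetween_eq_sum_outDeg (X Y : Finset (Fin n)) :
    arcsBetween D X Y = ∑ x ∈ X, outDeg D x Y := by
  rw [arcsBetween, card_filter, sum_product]
  exact sum_congr rfl fun x _ => (card_filter _ _).symm

lemma card_mul_le_arcsBetween {X Y : Finset (Fin n)} {d : ℝ}
    (h : ∀ x ∈ X, d ≤ outDeg D x Y) : #X * d ≤ arcsBetween D X Y := by
  rw [arcsBetween_eq_sum_outDeg, Nat.cast_sum]
  simpa using card_nsmul_le_sum X _ d h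

lemma arcsBetween_le_add_arcsIn {X Y Z : Finset (Fin n)} (h : outNbhd D X Y \ X ⊆ Z) :
    arcsBetween D X Y ≤ arcsBetween D X Z + arcsIn D X := by
  refine (card_le_card fun e he => ?_).trans (card_union_le _ _)
  simp only [mem_filter, mem_product, mem_union] at he ⊢
  obtain ⟨⟨hx, hy⟩, hxy⟩ := he
  by_cases hyX : e.2 ∈ X
  · exact Or.inr ⟨⟨hx, hyX⟩, hxy⟩
  · exact Or.inl ⟨⟨hx, h (mem_sdiff.2 ⟨mem_filter.2 ⟨hy, e.1, hx, hxy⟩, hyX⟩)⟩, hxy⟩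

lemma arcsBetween_transpose (X Y : Finset (Fin n)) :
    arcsBetween (fun v w => D w v) X Y = arcsBetween D Y X :=
  card_nbij' Prod.swap Prod.swap
    (fun _ he => by simpa [and_comm] using he) (fun _ he => by simpa [and_comm] using he)
    (fun _ _ => rfl) (fun _ _ => rfl)

variable {D}

lemma IsPseudorandom.transpose {α P : ℝ} (hD : IsPseudorandom n α P D) :
    IsPseudorandom n α P (fun v w => D w v) := by
  obtain ⟨hdeg, hin, hbetween⟩ := hD
  refine ⟨fun v => (hdeg v).symm, fun X hX => ?_, fun X Y hXY hX hY => ?_⟩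
  · have h : arcsIn (fun v w => D w v) X = arcsIn D X := arcsBetween_transpose D X X
    exact h ▸ hin X hX
  · rw [arcsBetween_transpose]
    linarith [hbetween Y X hXY.symm hY hX]

theorem IsPseudorandom.le_of_forall_le_outDeg {α P : ℝ} (hD : IsPseudorandom n α P D)
    {X Y Z : Finset (Fin n)} (hX₀ : X.Nonempty) (hX : log n ^ (1.1 : ℝ) / P ≤ #X)
    (hX' : #X ≤ log n ^ 2 / P) (hZ : log n ^ (1.1 : ℝ) / P ≤ #Z) (hXZ : Disjoint X Z)
    (hNZ : outNbhd D X Y \ X ⊆ Z) {d : ℝ} (hd : ∀ x ∈ X, d ≤ outDeg D x Y) :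
    d ≤ (1 + α / 2) * #Z * P + log n ^ (2.1 : ℝ) := by
  have hX₀' : (0 : ℝ) < #X := by exact_mod_cast hX₀.card_pos
  refine le_of_mul_le_mul_left ?_ hX₀'
  calc #X * d ≤ arcsBetween D X Y := card_mul_le_arcsBetween D hd
    _ ≤ (arcsBetween D X Z : ℝ) + arcsIn D X := by
      exact_mod_cast arcsBetween_le_add_arcsIn D hNZ
    _ ≤ (1 + α / 2) * #X * #Z * P + #X * log n ^ (2.1 : ℝ) :=
      add_le_add (hD.2.2 X Z hXZ hX hZ) (hD.2.1 X hX')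
    _ = #X * ((1 + α / 2) * #Z * P + log n ^ (2.1 : ℝ)) := by ring

end Arcs

lemma exists_superset_disjoint_card_eq_max {ι : Type*} [Fintype ι] [DecidableEq ι]
    {X N : Finset ι} {c : ℕ} (hNX : Disjoint N X) (hc : #X + c ≤ Fintype.card ι) :
    ∃ Z, N ⊆ Z ∧ Disjoint X Z ∧ #Z = max #N c := by
  have hN : N ⊆ Xᶜ := subset_compl_iff_disjoint_right.2 hNX
  obtain ⟨Z, hNZ, hZ, hcard⟩ := exists_subsuperset_card_eq (n := max #N c) hN (le_max_left _ _)
    (max_le (card_le_card hN) (by rw [card_compl]; omega))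
  exact ⟨Z, hNZ, subset_compl_iff_disjoint_left.1 hZ, hcard⟩

/-- The sense in which `n` is large for the edge probability `P`; it holds eventually when
`p = ω(log⁸ n / n)`. -/
structure LargeParams (n : ℕ) (P : ℝ) : Prop where
  pos : 0 < P
  lt_one : P < 1
  two_le_log : 2 ≤ log n
  four_le_log_rpow : 4 ≤ log n ^ (0.9 : ℝ)
  log_pow_le : 2 * log n ^ 8 ≤ P * n

namespace LargeParams

variable {n : ℕ} {P : ℝ} (h : LargeParams n P)
include h

lemma one_le_log_rpow : 1 ≤ log n ^ (1.1 : ℝ) :=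
  one_le_rpow (by linarith [h.two_le_log]) (by norm_num)

lemma four_mul_le : 4 * log n ^ (1.1 : ℝ) ≤ log n ^ 2 := by
  have hsplit : log n ^ 2 = log n ^ (1.1 : ℝ) * log n ^ (0.9 : ℝ) := by
    rw [← rpow_add (by linarith [h.two_le_log]), ← rpow_natCast]
    norm_num
  nlinarith [h.one_le_log_rpow, h.four_le_log_rpow]

lemma two_mul_le : 2 * log n ^ (1.1 : ℝ) ≤ log n ^ (2.1 : ℝ) := by
  have hsplit : log n ^ (2.1 : ℝ) = log n ^ (1.1 : ℝ) * log n := by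
    rw [← rpow_add_one (by linarith [h.two_le_log])]
    norm_num
  nlinarith [h.one_le_log_rpow, h.two_le_log]

lemma rpow_lt : log n ^ (2.1 : ℝ) < P * n := by
  have hle : log n ^ (2.1 : ℝ) ≤ log n ^ 8 := by
    rw [← rpow_natCast]
    exact rpow_le_rpow_of_exponent_le (by linarith [h.two_le_log]) (by norm_num)
  have hpos : 0 < log n ^ 8 := by have := h.two_le_log; positivity
  linarith [h.log_pow_le]

lemma le_floor : log n ^ (1.1 : ℝ) / P ≤ ⌊log n ^ 2 / (2 * P)⌋₊ := by
  have hP := h.pos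
  have hroom : log n ^ (1.1 : ℝ) / P + 1 ≤ log n ^ 2 / (2 * P) := by
    rw [div_add_one hP.ne', div_le_div_iff₀ hP (by positivity)]
    nlinarith [h.four_mul_le, h.one_le_log_rpow, h.lt_one]
  linarith [Nat.sub_one_lt_floor (log n ^ 2 / (2 * P))]

lemma floor_pos : 0 < ⌊log n ^ 2 / (2 * P)⌋₊ := by
  have := h.pos
  have := h.one_le_log_rpow
  exact_mod_cast (show (0 : ℝ) < log n ^ (1.1 : ℝ) / P by positivity).trans_le h.le_floor

lemma floor_le : (⌊log n ^ 2 / (2 * P)⌋₊ : ℝ) ≤ log n ^ 2 / P := by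
  have hP := h.pos
  refine (Nat.floor_le (by positivity)).trans
    (div_le_div_of_nonneg_left (by positivity) hP (by linarith))

lemma floor_add_ceil_le : ⌊log n ^ 2 / (2 * P)⌋₊ + ⌈log n ^ (1.1 : ℝ) / P⌉₊ ≤ n := by
  have hP := h.pos
  have hL8 : log n ^ 2 ≤ log n ^ 8 :=
    pow_le_pow_right₀ (by linarith [h.two_le_log]) (by norm_num)
  have hroom : log n ^ 2 / (2 * P) + (log n ^ (1.1 : ℝ) / P + 1) ≤ n := by
    have hsum : log n ^ 2 / (2 * P) + (log n ^ (1.1 : ℝ) / P + 1) =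
        (log n ^ 2 / 2 + log n ^ (1.1 : ℝ) + P) / P := by
      field_simp
      ring
    rw [hsum, div_le_iff₀ hP]
    nlinarith [h.four_mul_le, h.one_le_log_rpow, h.lt_one, h.log_pow_le]
  have hlt : ((⌊log n ^ 2 / (2 * P)⌋₊ + ⌈log n ^ (1.1 : ℝ) / P⌉₊ : ℕ) : ℝ) < n + 1 := by
    push_cast
    linarith [Nat.floor_le (show 0 ≤ log n ^ 2 / (2 * P) by positivity),
      Nat.ceil_lt_add_one (show 0 ≤ log n ^ (1.1 : ℝ) / P by positivity)]
  exact Nat.lt_add_one_iff.1 (by exact_mod_cast hlt)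

lemma ceil_mul_le : ⌈log n ^ (1.1 : ℝ) / P⌉₊ * P ≤ log n ^ (2.1 : ℝ) := by
  have hP := h.pos
  have hceil := Nat.ceil_lt_add_one (show 0 ≤ log n ^ (1.1 : ℝ) / P by positivity)
  have hmul : (⌈log n ^ (1.1 : ℝ) / P⌉₊ : ℝ) * P < log n ^ (1.1 : ℝ) + P := by
    calc (⌈log n ^ (1.1 : ℝ) / P⌉₊ : ℝ) * P < (log n ^ (1.1 : ℝ) / P + 1) * P :=
          mul_lt_mul_of_pos_right hceil hP
      _ = log n ^ (1.1 : ℝ) + P := by field_simp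
  linarith [h.two_mul_le, h.one_le_log_rpow, h.lt_one]

end LargeParams

lemma le_of_le_max_mul_add {α P y m c L : ℝ} (hα : 0 < α) (hα1 : α ≤ 1) (hP : 0 < P)
    (hm : 0 ≤ m) (hy : 6 * L / (α * P) ≤ y) (hc : c * P ≤ L)
    (h : (1 / 2 + α / 2) * P * y ≤ (1 + α / 2) * max m c * P + L) :
    (1 / 2 + α / 20) * y ≤ m := by
  have hL : 6 * L ≤ α * P * y := by
    have := (div_le_iff₀ (by positivity : 0 < α * P)).1 hy
    linarith
  have hmax : (1 / 2 + α / 3) * P * y ≤ (1 + α / 2) * max m c * P := by linarith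
  rcases le_total c m with hcm | hmc
  · rw [max_eq_left hcm] at hmax
    have hym : (1 / 2 + α / 3) * y ≤ (1 + α / 2) * m :=
      le_of_mul_le_mul_right (by linarith) hP
    rcases le_total y 0 with hy0 | hy0
    · nlinarith
    · nlinarith [mul_nonneg (mul_nonneg hα.le hy0) (sub_nonneg.2 hα1)]
  · -- `c` is too small to absorb the arcs, so this case forces `y ≤ 0`
    rw [max_eq_right hmc] at hmax
    have hcoef : 0 < 1 / 2 + α / 6 - α ^ 2 / 12 := by nlinarith
    have hPy : (1 / 2 + α / 6 - α ^ 2 / 12) * (P * y) ≤ 0 := by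
      nlinarith [mul_le_mul_of_nonneg_left hc (by positivity : (0 : ℝ) ≤ 1 + α / 2),
        mul_le_mul_of_nonneg_left hL (by positivity : (0 : ℝ) ≤ 1 + α / 2)]
    have hy0 : y ≤ 0 := nonpos_of_mul_nonpos_right (nonpos_of_mul_nonpos_right hPy hcoef) hP
    nlinarith

namespace IsPseudorandom

variable {n : ℕ} {α P : ℝ} {D : Fin n → Fin n → Bool}

/-- The count with `Y = V(D)`: (P1) demands `(1/2 + 2α) n p` arcs out of each vertex, while (P3)
allows only about `(1 + α/2) n p`. -/
theorem lt_one (hD : IsPseudorandom n α P D) (hn : LargeParams n P) : α < 1 := by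
  by_contra! hα
  obtain ⟨X, -, hX⟩ := exists_subset_card_eq (s := (univ : Finset (Fin n)))
    (n := ⌊log n ^ 2 / (2 * P)⌋₊)
    (by simpa using (Nat.le_add_right _ _).trans hn.floor_add_ceil_le)
  have hX₁ : log n ^ (1.1 : ℝ) / P ≤ #X := hX ▸ hn.le_floor
  have hX₂ : (#X : ℝ) ≤ log n ^ 2 / P := hX ▸ hn.floor_le
  have hX₀ : X.Nonempty := card_pos.1 (hX ▸ hn.floor_pos)
  have hXc : log n ^ (1.1 : ℝ) / P ≤ #Xᶜ := by
    have hcard : #X + ⌈log n ^ (1.1 : ℝ) / P⌉₊ ≤ #X + #Xᶜ := by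
      rw [card_add_card_compl, Fintype.card_fin, hX]
      exact hn.floor_add_ceil_le
    exact (Nat.le_ceil _).trans (by exact_mod_cast Nat.le_of_add_le_add_left hcard)
  have hcount := hD.le_of_forall_le_outDeg (Y := univ) hX₀ hX₁ hX₂ hXc disjoint_compl_right
    (fun y hy => mem_compl.2 (mem_sdiff.1 hy).2) fun x _ => (hD.1 x).1
  have hXcn : (#Xᶜ : ℝ) ≤ n := by exact_mod_cast (card_le_univ _).trans_eq (Fintype.card_fin n)
  have hPn : 0 < P * n := (hn.rpow_lt).trans_le' (by have := hn.two_le_log; positivity)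
  have hZn : (1 + α / 2) * #Xᶜ * P ≤ (1 + α / 2) * n * P :=
    mul_le_mul_of_nonneg_right (mul_le_mul_of_nonneg_left hXcn (by positivity)) hn.pos.le
  nlinarith [hn.rpow_lt, mul_nonneg (sub_nonneg.2 hα) hPn.le]

theorem card_outNbhd_ge (hD : IsPseudorandom n α P D) (hn : LargeParams n P) (hα : 0 < α)
    (hα1 : α ≤ 1) {X Y : Finset (Fin n)} (hX : #X = ⌊log n ^ 2 / (2 * P)⌋₊)
    (hY : 6 * log n ^ (2.1 : ℝ) / (α * P) ≤ #Y)
    (hdeg : ∀ x ∈ X, (1 / 2 + α / 2) * P * #Y ≤ outDeg D x Y) :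
    (1 / 2 + α / 20) * #Y ≤ #(outNbhd D X Y) := by
  have hX₁ : log n ^ (1.1 : ℝ) / P ≤ #X := hX ▸ hn.le_floor
  have hX₂ : (#X : ℝ) ≤ log n ^ 2 / P := hX ▸ hn.floor_le
  have hX₀ : X.Nonempty := card_pos.1 (hX ▸ hn.floor_pos)
  obtain ⟨Z, hNZ, hXZ, hZ⟩ := exists_superset_disjoint_card_eq_max
    (N := outNbhd D X Y \ X) (c := ⌈log n ^ (1.1 : ℝ) / P⌉₊) sdiff_disjoint
    (by simpa [hX] using hn.floor_add_ceil_le)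
  have hZ₁ : log n ^ (1.1 : ℝ) / P ≤ #Z :=
    (Nat.le_ceil _).trans (by rw [hZ]; exact_mod_cast le_max_right _ _)
  have hcount := hD.le_of_forall_le_outDeg hX₀ hX₁ hX₂ hZ₁ hXZ hNZ hdeg
  rw [hZ, Nat.cast_max] at hcount
  have hsub : (#(outNbhd D X Y \ X) : ℝ) ≤ #(outNbhd D X Y) := by
    exact_mod_cast card_le_card sdiff_subset
  exact (le_of_le_max_mul_add hα hα1 hn.pos (Nat.cast_nonneg _) hY hn.ceil_mul_le hcount).trans hsub

end IsPseudorandom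

/-- Lemma 4.1: in a pseudorandom digraph, a set `X` of size `⌊log² n/(2p)⌋`
whose vertices have large in/out-degree into `Y` expands to more than half
of `Y` in both directions. -/
theorem stmt_8 (α : ℝ) (hα : 0 < α) (p : ℕ → ℝ) (hp : ∀ n, 0 < p n ∧ p n < 1)
    (hω : Tendsto (fun n : ℕ => p n * n / (Real.log n) ^ 8) atTop atTop)
    (D : (n : ℕ) → Fin n → Fin n → Bool)
    (hD : ∀ n, IsPseudorandom n α (p n) (D n)) :
    ∀ᶠ n in atTop, ∀ X Y : Finset (Fin n),
      X.card = ⌊(Real.log n) ^ 2 / (2 * p n)⌋₊ →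
      6 * (Real.log n) ^ (2.1 : ℝ) / (α * p n) ≤ (Y.card : ℝ) →
      (∀ x ∈ X, (1/2 + α/2) * p n * Y.card ≤ (outDeg (D n) x Y : ℝ) ∧
        (1/2 + α/2) * p n * Y.card ≤ (inDeg (D n) x Y : ℝ)) →
      (1/2 + α/20) * Y.card ≤ ((outNbhd (D n) X Y).card : ℝ) ∧
      (1/2 + α/20) * Y.card ≤ ((inNbhd (D n) X Y).card : ℝ) := by
  have hlog : Tendsto (fun n : ℕ => log n) atTop atTop :=
    tendsto_log_atTop.comp tendsto_natCast_atTop_atTop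
  have hlarge : ∀ᶠ n in atTop, LargeParams n (p n) := by
    filter_upwards [hlog.eventually_ge_atTop 2,
      ((tendsto_rpow_atTop (by norm_num : (0 : ℝ) < 0.9)).comp hlog).eventually_ge_atTop 4,
      hω.eventually_ge_atTop 2] with n hL hL9 hω2
    refine ⟨(hp n).1, (hp n).2, hL, hL9, ?_⟩
    rwa [le_div_iff₀ (pow_pos (by linarith) 8)] at hω2
  filter_upwards [hlarge] with n hn X Y hX hY hdeg
  have hα1 := (hD n).lt_one hn
  exact ⟨(hD n).card_outNbhd_ge hn hα hα1.le hX hY fun x hx => (hdeg x hx).1,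
    (hD n).transpose.card_outNbhd_ge hn hα hα1.le hX hY fun x hx => (hdeg x hx).2⟩
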